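/- arXiv:2411.08803 — 2 statements merged into one kernel-verified Lean document; each statement's English description precedes it below -/
import Mathlib

section
/- For every finite group G and every irreducible complex character χ of G, the sum of the values of χ over a set of representatives of the conjugacy classes of G is a non-negative integer. -/
/-!
Let `π` be the permutation representation of `G` on `ℂ[G]` by conjugation; its character is
`π(x) = |C_G(x)|`. Since `χ` and `π` are class functions and `|C_G(x)| · |x^G| = |G|`,
`|G|⁻¹ ∑_{x ∈ G} χ(x) π(x) = ∑_i χ(g_i)`, and the left side is the dimension of the
`G`-invariants of `V ⊗ π`.
-/

open MulAction

namespace Representation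

variable {k G H : Type*} [Field k] [Monoid G] [MulAction G H] [Fintype H]

theorem char_ofMulAction (g : G) :
    (ofMulAction k G H).character g = Nat.card (fixedBy H g) := by
  classical
  rw [character, LinearMap.trace_eq_matrix_trace k (MonoidAlgebra.basis H k), Matrix.trace]
  have hdiag (a : H) : (LinearMap.toMatrix (MonoidAlgebra.basis H k) (MonoidAlgebra.basis H k)
      (ofMulAction k G H g)).diag a = if g • a = a then 1 else 0 := by
    rw [Matrix.diag, LinearMap.toMatrix_apply, MonoidAlgebra.basis_apply, ofMulAction_single]
    change (MonoidAlgebra.single (g • a) (1 : k)).coeff a = _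
    rw [MonoidAlgebra.coeff_single, Finsupp.single_apply]
  simp only [hdiag, Finset.sum_boole, Nat.card_eq_card_toFinset]
  congr
  ext
  simp

end Representation

section ConjClasses

variable {G : Type*} [Group G]

theorem Subgroup.nat_card_centralizer_mul_nat_card_carrier (x : G) :
    Nat.card (Subgroup.centralizer {x}) * Nat.card (ConjClasses.mk x).carrier = Nat.card G := by
  rw [Subgroup.nat_card_centralizer_nat_card_stabilizer, ← ConjAct.orbit_eq_carrier_conjClasses,
    Nat.card_coe_set_eq, ← index_stabilizer, Subgroup.card_mul_index]
  rfl

theorem IsConj.nat_card_centralizer_eq [Finite G] {x y : G} (h : IsConj x y) :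
    Nat.card (Subgroup.centralizer {x}) = Nat.card (Subgroup.centralizer {y}) := by
  have : Nonempty (ConjClasses.mk x).carrier := ⟨⟨x, ConjClasses.mem_carrier_mk⟩⟩
  refine Nat.eq_of_mul_eq_mul_right (Nat.card_pos (α := (ConjClasses.mk x).carrier)) ?_
  rw [Subgroup.nat_card_centralizer_mul_nat_card_carrier, ConjClasses.mk_eq_mk_iff_isConj.mpr h,
    Subgroup.nat_card_centralizer_mul_nat_card_carrier]

variable {ι : Type*} {g : ι → G}

theorem bijective_conjClassesMk_of_existsUnique (hg : ∀ x : G, ∃! i, IsConj (g i) x) :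
    Function.Bijective (fun i ↦ ConjClasses.mk (g i)) := by
  refine ⟨fun i j hij ↦ ?_, fun c ↦ ?_⟩
  · exact (hg (g j)).unique (ConjClasses.mk_eq_mk_iff_isConj.mp hij) (IsConj.refl _)
  · obtain ⟨x, rfl⟩ := ConjClasses.mk_surjective c
    obtain ⟨i, hi, -⟩ := hg x
    exact ⟨i, ConjClasses.mk_eq_mk_iff_isConj.mpr hi⟩

theorem sum_eq_sum_nat_card_carrier_smul_of_existsUnique [Fintype G] [Fintype ι]
    {M : Type*} [AddCommMonoid M]
    (hg : ∀ x : G, ∃! i, IsConj (g i) x) (F : G → M) (hF : ∀ x y, IsConj x y → F x = F y) :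
    ∑ x, F x = ∑ i, Nat.card (ConjClasses.mk (g i)).carrier • F (g i) := by
  classical
  rw [← Finset.sum_fiberwise Finset.univ ConjClasses.mk F]
  refine (Fintype.sum_bijective _ (bijective_conjClassesMk_of_existsUnique hg) _ _
    fun i ↦ ?_).symm
  rw [Finset.sum_congr rfl fun x hx ↦
      hF x (g i) (ConjClasses.mk_eq_mk_iff_isConj.mp (Finset.mem_filter.mp hx).2),
    Finset.sum_const, Nat.card_eq_card_toFinset]
  congr
  ext x
  simp [ConjClasses.mem_carrier_iff_mk_eq]

theorem sum_mul_nat_card_centralizer_eq_nat_card_mul_sum [Fintype G] [Fintype ι]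
    {R : Type*} [CommSemiring R]
    (hg : ∀ x : G, ∃! i, IsConj (g i) x) (f : G → R) (hf : ∀ x y, IsConj x y → f x = f y) :
    ∑ x, f x * Nat.card (Subgroup.centralizer {x}) = Nat.card G * ∑ i, f (g i) := by
  rw [sum_eq_sum_nat_card_carrier_smul_of_existsUnique hg _
      fun x y h ↦ by rw [hf x y h, h.nat_card_centralizer_eq],
    Finset.mul_sum]
  refine Finset.sum_congr rfl fun i _ ↦ ?_
  rw [nsmul_eq_mul, ← Subgroup.nat_card_centralizer_mul_nat_card_carrier (g i)]
  push_cast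
  ring

end ConjClasses

open Representation CategoryTheory.MonoidalCategory

universe u

theorem FDRep.char_eq_of_isConj {k G : Type u} [Field k] [Group G] (V : FDRep k G) {x y : G}
    (h : IsConj x y) : V.character x = V.character y := by
  obtain ⟨c, rfl⟩ := isConj_iff.mp h
  exact (FDRep.char_conj V x c).symm

noncomputable def conjRep (k G : Type u) [Field k] [Group G] [Fintype G] : FDRep k G :=
  FDRep.of ((ofMulAction k (ConjAct G) G).comp ConjAct.toConjAct.toMonoidHom)

theorem char_conjRep (k : Type u) {G : Type u} [Field k] [Group G] [Fintype G] (x : G) :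
    (conjRep k G).character x = Nat.card (Subgroup.centralizer {x}) := by
  change (ofMulAction k (ConjAct G) G).character (ConjAct.toConjAct x) = _
  rw [char_ofMulAction]
  congr 1
  refine Nat.card_congr (Equiv.subtypeEquivRight fun a ↦ ?_)
  rw [mem_fixedBy, ConjAct.toConjAct_smul, mul_inv_eq_iff_eq_mul, eq_comm]
  exact Subgroup.mem_centralizer_singleton_iff.symm

theorem sum_character_eq_finrank_invariants_tensor_conjRep {k G : Type u} [Field k] [Group G]
    [Fintype G] [Invertible (Nat.card G : k)] {ι : Type*} [Fintype ι] {g : ι → G}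
    (hg : ∀ x : G, ∃! i, IsConj (g i) x) (V : FDRep k G) :
    ∑ i, V.character (g i) = Module.finrank k (invariants (V ⊗ conjRep k G).ρ) := by
  rw [← FDRep.average_char_eq_finrank_invariants, FDRep.char_tensor]
  simp only [Pi.mul_apply, char_conjRep]
  rw [sum_mul_nat_card_centralizer_eq_nat_card_mul_sum hg _ fun _ _ ↦ V.char_eq_of_isConj,
    inv_mul_cancel_left₀ (Invertible.ne_zero _)]

theorem row_sum_of_irreducible_character_is_nonneg_integer_general
    {G : Type} [Group G] [Fintype G] {d : ℕ}
    (g : Fin (d + 1) → G)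
    (hg : ∀ x : G, ∃! i : Fin (d + 1), IsConj (g i) x)
    (V : FDRep ℂ G) :
    ∃ m : ℕ, ∑ i, V.character (g i) = (m : ℂ) := by
  have : Invertible (Nat.card G : ℂ) :=
    invertibleOfNonzero (Nat.cast_ne_zero.mpr Nat.card_pos.ne')
  exact ⟨_, sum_character_eq_finrank_invariants_tensor_conjRep hg V⟩

/-- For every finite group `G` and every irreducible complex character
`χ` of `G`, the sum of the values of `χ` over a set of representatives of the
conjugacy classes of `G` is a non-negative integer. -/
theorem row_sum_of_irreducible_character_is_nonneg_integer
    {G : Type} [Group G] [Fintype G] {d : ℕ}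
    (g : Fin (d + 1) → G)
    (hg : ∀ x : G, ∃! i : Fin (d + 1), IsConj (g i) x)
    (V : FDRep ℂ G) (hV : CategoryTheory.Simple V) :
    ∃ m : ℕ, ∑ i, V.character (g i) = (m : ℂ) :=
  row_sum_of_irreducible_character_is_nonneg_integer_general g hg V
end

section
/- Let T̃ = End_{H_1}(ℂS_n) where H_1 = Inn(S_n) ⋊ ⟨φ⟩ (φ the inversion map) acts on ℂS_n, and let λ ⊢ n. Then the sum of the dimensions of the irreducible T̃-modules corresponding to the signed partitions λ⁺ and λ⁻ (with the zero module allowed) equals the row sum d_{χ^λ} = ∑_{μ ⊢ n} χ^λ_μ of the character table of S_n. -/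
/-!
Only the elements `(g, 1)` of `H₁` contribute to the sum of the two multiplicities, since
`χ^{λ⁺} + χ^{λ⁻}` vanishes off `Sₙ × {1}`; there the permutation character is `|C(g)|`.
Characters of `Sₙ` are real because every permutation is conjugate to its inverse, and summing
`|C(g)| χ(g)` class by class gives `|Sₙ| ∑_μ χ(r μ)` by the orbit–stabilizer theorem.
-/

open Module Polynomial LinearMap MulAction

theorem LinearMap.trace_eq_sum_of_apply_basis_eq_smul {R M ι : Type*} [CommRing R]
    [AddCommGroup M] [Module R M] [Fintype ι] [DecidableEq ι] (b : Basis ι R M)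
    {f : End R M} (μ : ι → R) (h : ∀ i, f (b i) = μ i • b i) :
    trace R M f = ∑ i, μ i := by
  simp [trace_eq_matrix_trace R b, Matrix.trace, toMatrix_apply, h]

theorem Module.End.trace_eq_conj_trace_of_mul_eq_one_of_pow_eq_one {V : Type*} [AddCommGroup V]
    [Module ℂ V] [FiniteDimensional ℂ V] {f g : End ℂ V} {m : ℕ} (hm : m ≠ 0)
    (hf : f ^ m = 1) (hgf : g * f = 1) :
    trace ℂ V g = starRingEnd ℂ (trace ℂ V f) := by
  classical
  -- `X ^ m - 1` is squarefree, so `f` has an eigenbasis; its eigenvalues are roots of unity,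
  -- on which `g` acts by `μ⁻¹ = conj μ`.
  have hss : f.IsSemisimple :=
    isSemisimple_of_squarefree_aeval_eq_zero
      (separable_X_pow_sub_C 1 (Nat.cast_ne_zero.mpr hm) one_ne_zero).squarefree (by simp [hf])
  have hdecomp := DirectSum.isInternal_submodule_of_iSupIndep_of_iSup_eq_top
    f.eigenspaces_iSupIndep hss.iSup_eigenspace_eq_top
  let b := hdecomp.collectedBasis fun μ ↦ finBasis ℂ (f.eigenspace μ)
  have : Fintype ((μ : ℂ) × Fin (finrank ℂ (f.eigenspace μ))) :=
    FiniteDimensional.fintypeBasisIndex b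
  have hb : ∀ i, f.HasEigenvector i.1 (b i) := fun i ↦
    ⟨hdecomp.collectedBasis_mem _ i, b.ne_zero i⟩
  have hg : ∀ i, g (b i) = starRingEnd ℂ i.1 • b i := by
    intro i
    have hroot : i.1 ^ m = 1 := by
      refine smul_left_injective ℂ (b.ne_zero i) ?_
      simpa [hf, eq_comm] using (hb i).pow_apply m
    have hinv : b i = i.1 • g (b i) := by
      rw [← map_smul, ← (hb i).apply_eq_smul, ← End.mul_apply, hgf, End.one_apply]
    rw [← Complex.inv_eq_conj (Complex.norm_eq_one_of_pow_eq_one hroot hm),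
      eq_inv_smul_iff₀ (IsUnit.of_pow_eq_one hroot hm).ne_zero, ← hinv]
  rw [LinearMap.trace_eq_sum_of_apply_basis_eq_smul b _ hg,
    LinearMap.trace_eq_sum_of_apply_basis_eq_smul b _ fun i ↦ (hb i).apply_eq_smul, map_sum]

theorem MulAction.sum_card_stabilizer_smul_eq_card_smul_sum {G X ι M : Type*} [Group G]
    [Finite G] [MulAction G X] [Fintype X] [Fintype ι] [AddCommMonoid M] (r : ι → X)
    (hr : ∀ x, ∃! i, r i ∈ orbit G x) (F : X → M) (hF : ∀ (g : G) x, F (g • x) = F x) :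
    ∑ x, Nat.card (stabilizer G x) • F x = Nat.card G • ∑ i, F (r i) := by
  classical
  choose φ hφ hφu using hr
  have hfiber : ∀ i x, φ x = i ↔ x ∈ orbit G (r i) := fun i x ↦
    ⟨fun h ↦ h ▸ mem_orbit_symm.mp (hφ x), fun h ↦ (hφu x i (mem_orbit_symm.mp h)).symm⟩
  rw [← Fintype.sum_fiberwise φ, Finset.smul_sum]
  refine Finset.sum_congr rfl fun i _ ↦ ?_
  have hterm : ∀ x : {x // φ x = i},
      Nat.card (stabilizer G (x : X)) • F x = Nat.card (stabilizer G (r i)) • F (r i) := by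
    rintro ⟨x, hx⟩
    obtain ⟨g, rfl⟩ := (hfiber i x).mp hx
    rw [hF, Nat.card_congr
      (stabilizerEquivStabilizerOfOrbitRel (orbitRel_apply.mpr ⟨g, rfl⟩)).toEquiv]
  rw [Finset.sum_congr rfl fun x _ ↦ hterm x, Finset.sum_const, Finset.card_univ, smul_smul,
    ← Nat.card_eq_fintype_card, Nat.card_congr (Equiv.subtypeEquivRight (hfiber i)),
    Nat.card_coe_set_eq, ← index_stabilizer, Subgroup.index_mul_card]

theorem FDRep.char_inv_eq_star_char {G : Type*} [Group G] (V : FDRep ℂ G) {g : G}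
    (hg : IsOfFinOrder g) : V.character g⁻¹ = starRingEnd ℂ (V.character g) :=
  End.trace_eq_conj_trace_of_mul_eq_one_of_pow_eq_one hg.orderOf_pos.ne'
    (by rw [← map_pow, pow_orderOf_eq_one, map_one])
    (by rw [← map_mul, inv_mul_cancel, map_one])

theorem FDRep.star_char_perm {α : Type*} [Fintype α] [DecidableEq α]
    (V : FDRep ℂ (Equiv.Perm α)) (σ : Equiv.Perm α) :
    starRingEnd ℂ (V.character σ) = V.character σ := by
  obtain ⟨c, hc⟩ := isConj_iff.mp <|
    Equiv.Perm.isConj_iff_cycleType_eq.mpr (Equiv.Perm.cycleType_inv σ)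
  rw [← V.char_inv_eq_star_char (isOfFinOrder_of_finite σ), ← V.char_conj σ⁻¹ c, hc]

theorem card_subtype_conj_fixed_eq_card_stabilizer {G : Type*} [Group G] (g : G) :
    Nat.card {x : G // g * x * g⁻¹ = x} = Nat.card (stabilizer (ConjAct G) g) := by
  rw [← Subgroup.nat_card_centralizer_nat_card_stabilizer]
  refine Nat.card_congr (Equiv.subtypeEquivRight fun x ↦ ?_)
  rw [Subgroup.mem_centralizer_singleton_iff, mul_inv_eq_iff_eq_mul, eq_comm]

theorem sum_multiplicities_plus_minus_eq_row_sum_general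
    (n : ℕ)
    (V : FDRep ℂ (Equiv.Perm (Fin n)))
    (r : Nat.Partition n → Equiv.Perm (Fin n))
    (hr : ∀ x : Equiv.Perm (Fin n), ∃! μ : Nat.Partition n, IsConj (r μ) x)
    (act : Equiv.Perm (Fin n) × Multiplicative (ZMod 2) →
      Equiv.Perm (Fin n) → Equiv.Perm (Fin n))
    (hact : ∀ (g : Equiv.Perm (Fin n)) (ε : Multiplicative (ZMod 2))
      (x : Equiv.Perm (Fin n)),
      act (g, ε) x = if ε = 1 then g * x * g⁻¹ else g * x⁻¹ * g⁻¹)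
    (π : Equiv.Perm (Fin n) × Multiplicative (ZMod 2) → ℂ)
    (hπ : ∀ h, π h = (Fintype.card {x : Equiv.Perm (Fin n) // act h x = x} : ℂ))
    (sgn : Multiplicative (ZMod 2) → ℂ)
    (hsgn : ∀ ε, sgn ε = if ε = 1 then 1 else -1) :
    (1 / (Fintype.card (Equiv.Perm (Fin n) × Multiplicative (ZMod 2)) : ℂ)) *
        (∑ h : Equiv.Perm (Fin n) × Multiplicative (ZMod 2),
          π h * (starRingEnd ℂ) (V.character h.1)) +
      (1 / (Fintype.card (Equiv.Perm (Fin n) × Multiplicative (ZMod 2)) : ℂ)) *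
        (∑ h : Equiv.Perm (Fin n) × Multiplicative (ZMod 2),
          π h * (starRingEnd ℂ) (V.character h.1 * sgn h.2)) =
      ∑ μ : Nat.Partition n, V.character (r μ) := by
  have hπ₁ : ∀ g, π (g, 1) = Nat.card (stabilizer (ConjAct (Equiv.Perm (Fin n))) g) := by
    intro g
    rw [hπ, ← card_subtype_conj_fixed_eq_card_stabilizer, Nat.card_eq_fintype_card]
    simp only [hact, if_true]
  have hsum_sgn : ∀ g, ∑ ε, (π (g, ε) * starRingEnd ℂ (V.character g) +
      π (g, ε) * starRingEnd ℂ (V.character g * sgn ε)) = 2 * (π (g, 1) * V.character g) := by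
    intro g
    rw [Fintype.sum_eq_single 1 fun ε hε ↦ by simp [hsgn, hε]]
    simp only [V.star_char_perm, hsgn, if_true, mul_one]
    ring
  have hcard : (Fintype.card (Equiv.Perm (Fin n) × Multiplicative (ZMod 2)) : ℂ) =
      2 * Nat.card (Equiv.Perm (Fin n)) := by
    simp [mul_comm]
  rw [← mul_add, ← Finset.sum_add_distrib, Fintype.sum_prod_type,
    Finset.sum_congr rfl fun g _ ↦ hsum_sgn g, ← Finset.mul_sum]
  simp_rw [hπ₁, ← nsmul_eq_mul]
  rw [sum_card_stabilizer_smul_eq_card_smul_sum r (by simpa using hr) _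
    fun c g ↦ V.char_conj g (ConjAct.ofConjAct c), Nat.card_congr ConjAct.ofConjAct.toEquiv,
    hcard, nsmul_eq_mul]
  field_simp

/-- Let `H₁ = Inn(S_n) ⋊ ⟨φ⟩ ≅ S_n × C_2` (with `φ` the inversion
map) act on `S_n` by `(g, ε) • x = g xᵉ g⁻¹`, with permutation character `π`.  For
an irreducible character `χ = χ^λ` of `S_n`, the irreducible `T̃`-modules of
`T̃ = End_{H₁}(ℂ S_n)` corresponding to the signed partitions `λ⁺` and `λ⁻` have
dimensions equal to the multiplicities `⟨π, χ^{λ⁺}⟩` and `⟨π, χ^{λ⁻}⟩`, and their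
sum equals the row sum `∑_{μ ⊢ n} χ^λ_μ` of the character table of `S_n`. -/
theorem sum_multiplicities_plus_minus_eq_row_sum
    (n : ℕ) (hn : 3 ≤ n)
    (V : FDRep ℂ (Equiv.Perm (Fin n))) (hV : CategoryTheory.Simple V)
    (r : Nat.Partition n → Equiv.Perm (Fin n))
    (hr : ∀ x : Equiv.Perm (Fin n), ∃! μ : Nat.Partition n, IsConj (r μ) x)
    (act : Equiv.Perm (Fin n) × Multiplicative (ZMod 2) →
      Equiv.Perm (Fin n) → Equiv.Perm (Fin n))
    (hact : ∀ (g : Equiv.Perm (Fin n)) (ε : Multiplicative (ZMod 2))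
      (x : Equiv.Perm (Fin n)),
      act (g, ε) x = if ε = 1 then g * x * g⁻¹ else g * x⁻¹ * g⁻¹)
    (π : Equiv.Perm (Fin n) × Multiplicative (ZMod 2) → ℂ)
    (hπ : ∀ h, π h = (Fintype.card {x : Equiv.Perm (Fin n) // act h x = x} : ℂ))
    (sgn : Multiplicative (ZMod 2) → ℂ)
    (hsgn : ∀ ε, sgn ε = if ε = 1 then 1 else -1) :
    (1 / (Fintype.card (Equiv.Perm (Fin n) × Multiplicative (ZMod 2)) : ℂ)) *
        (∑ h : Equiv.Perm (Fin n) × Multiplicative (ZMod 2),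
          π h * (starRingEnd ℂ) (V.character h.1)) +
      (1 / (Fintype.card (Equiv.Perm (Fin n) × Multiplicative (ZMod 2)) : ℂ)) *
        (∑ h : Equiv.Perm (Fin n) × Multiplicative (ZMod 2),
          π h * (starRingEnd ℂ) (V.character h.1 * sgn h.2)) =
      ∑ μ : Nat.Partition n, V.character (r μ) :=
  sum_multiplicities_plus_minus_eq_row_sum_general n V r hr act hact π hπ sgn hsgn
end
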